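/- Let s ≥ 3/2 be a real number and α, β, γ ∈ ℝ. There exists a constant C > 0 (depending only on s, α, β, γ) such that for all functions f₁, f₂, f₃ : ℤ → ℂ, ‖ k ↦ Σ_{(k₁,k₂,k₃)∈ℤ³, k₁+k₂+k₃=k} |Q^{(3)}(k₁,k₂,k₃)| · 3[χ_{R3}^{(3)}]_{sym}^{(3)}(k₁,k₂,k₃) · Π_{l=1}^3 |f_l(k_l)| ‖_{ℓ²_s} ≤ C · Π_{l=1}^3 ‖f_l‖_{ℓ²_s}. -/

import Mathlib

open scoped BigOperators ENNReal NNReal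

/-- The Japanese bracket `⟨k⟩ = (1+k²)^{1/2}`. -/
noncomputable def jbr (k : ℤ) : ℝ := Real.sqrt (1 + (k : ℝ) ^ 2)

/-- The weighted `ℓ²_s` norm of a nonnegative sequence, valued in `ℝ≥0∞`. -/
noncomputable def wnorm (s : ℝ) (g : ℤ → ℝ≥0∞) : ℝ≥0∞ :=
  (∑' k : ℤ, ENNReal.ofReal (jbr k ^ (2 * s)) * g k ^ 2) ^ ((1 : ℝ) / 2)

/-- The `ℓ²_s` norm of a complex sequence (the `H^s` norm on the Fourier side). -/
noncomputable def hnorm (s : ℝ) (f : ℤ → ℂ) : ℝ≥0∞ :=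
  wnorm s fun k => (‖f k‖₊ : ℝ≥0∞)

/-- The full cubic multiplier `Q^{(3)}`. -/
noncomputable def Q3full (α β γ : ℝ) (a b c : ℤ) : ℂ :=
  -(Complex.I / 3) * (γ : ℂ) * ((a + b + c : ℤ) : ℂ) *
      (((a + b : ℤ) : ℂ) ^ 2 + ((b + c : ℤ) : ℂ) ^ 2 + ((a + c : ℤ) : ℂ) ^ 2) -
    (Complex.I / 3) * (β : ℂ) * ((a + b + c : ℤ) : ℂ) * ((a * b + b * c + a * c : ℤ) : ℂ) -
    Complex.I * (α : ℂ) * ((a * b * c : ℤ) : ℂ)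

/-- `χ_{R3}^{(3)}`: indicator of `k₁ = -k₂ = k₃`. -/
noncomputable def chiR3 (a b c : ℤ) : ℝ := if a = -b ∧ c = -b then 1 else 0

/-- Symmetrization of a real `3`-multiplier. -/
noncomputable def sym3R (M : ℤ → ℤ → ℤ → ℝ) (a b c : ℤ) : ℝ :=
  (M a b c + M a c b + M b a c + M b c a + M c a b + M c b a) / 6

lemma jbr_pos (k : ℤ) : 0 < jbr k := Real.sqrt_pos.mpr (by positivity)

lemma one_le_jbr (k : ℤ) : 1 ≤ jbr k := by
  have : Real.sqrt 1 ≤ jbr k := Real.sqrt_le_sqrt (by nlinarith [sq_nonneg ((k:ℝ))])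
  simpa using this

lemma jbr_neg (k : ℤ) : jbr (-k) = jbr k := by simp [jbr]

lemma abs_le_jbr (k : ℤ) : |(k:ℝ)| ≤ jbr k := by
  rw [jbr, ← Real.sqrt_sq_eq_abs]
  exact Real.sqrt_le_sqrt (by nlinarith)

lemma sq_rpow_half (x : ℝ≥0∞) : (x ^ 2) ^ ((1:ℝ)/2) = x := by
  rw [← ENNReal.rpow_natCast x 2, ← ENNReal.rpow_mul]; norm_num

lemma rpow_half_sq (x : ℝ≥0∞) : (x ^ ((1:ℝ)/2)) ^ 2 = x := by
  rw [← ENNReal.rpow_natCast _ 2, ← ENNReal.rpow_mul]; norm_num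

lemma hnorm_sq (s : ℝ) (f : ℤ → ℂ) :
    hnorm s f ^ 2 = ∑' k, ENNReal.ofReal (jbr k ^ (2*s)) * (‖f k‖₊ : ℝ≥0∞) ^ 2 :=
  rpow_half_sq _

lemma le_hnorm (s : ℝ) (f : ℤ → ℂ) (k : ℤ) :
    (‖f k‖₊ : ℝ≥0∞) ≤ ENNReal.ofReal (jbr k ^ (-s)) * hnorm s f := by
  have hterm : ENNReal.ofReal (jbr k ^ (2*s)) * (‖f k‖₊:ℝ≥0∞)^2 ≤ hnorm s f ^ 2 := by
    rw [hnorm_sq]; exact ENNReal.le_tsum k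
  have hsq : (jbr k ^ s)^2 = jbr k ^ (2*s) := by
    rw [← Real.rpow_natCast (jbr k ^ s) 2, ← Real.rpow_mul (jbr_pos k).le]
    norm_num [mul_comm]
  have h2 : (ENNReal.ofReal (jbr k ^ s) * (‖f k‖₊:ℝ≥0∞))^2 ≤ hnorm s f ^ 2 := by
    rw [mul_pow, ← ENNReal.ofReal_pow (Real.rpow_nonneg (jbr_pos k).le _), hsq]
    exact hterm
  have h3 : ENNReal.ofReal (jbr k ^ s) * (‖f k‖₊:ℝ≥0∞) ≤ hnorm s f := by
    have := ENNReal.rpow_le_rpow h2 (by norm_num : (0:ℝ) ≤ 1/2)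
    rwa [sq_rpow_half, sq_rpow_half] at this
  calc (‖f k‖₊:ℝ≥0∞)
      = ENNReal.ofReal (jbr k ^ (-s)) * (ENNReal.ofReal (jbr k ^ s) * (‖f k‖₊:ℝ≥0∞)) := by
        rw [← mul_assoc, ← ENNReal.ofReal_mul (Real.rpow_nonneg (jbr_pos k).le _),
          ← Real.rpow_add (jbr_pos k)]
        norm_num
    _ ≤ _ := mul_le_mul_right h3 _

lemma wnorm_mono {s : ℝ} {g g' : ℤ → ℝ≥0∞} (h : ∀ k, g k ≤ g' k) : wnorm s g ≤ wnorm s g' :=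
  ENNReal.rpow_le_rpow
    (ENNReal.tsum_le_tsum fun k => mul_le_mul_right (pow_le_pow_left' (h k) 2) _)
    (by norm_num)

lemma chiR3_nonneg (a b c : ℤ) : 0 ≤ chiR3 a b c := by
  unfold chiR3; split_ifs <;> norm_num

lemma chiR3_le_one (a b c : ℤ) : chiR3 a b c ≤ 1 := by
  unfold chiR3; split_ifs <;> norm_num

lemma sym_nonneg (a b c : ℤ) : 0 ≤ sym3R chiR3 a b c := by
  unfold sym3R
  have h1 := chiR3_nonneg a b c; have h2 := chiR3_nonneg a c b
  have h3 := chiR3_nonneg b a c; have h4 := chiR3_nonneg b c a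
  have h5 := chiR3_nonneg c a b; have h6 := chiR3_nonneg c b a
  linarith

lemma sym_le_one (a b c : ℤ) : sym3R chiR3 a b c ≤ 1 := by
  unfold sym3R
  have h1 := chiR3_le_one a b c; have h2 := chiR3_le_one a c b
  have h3 := chiR3_le_one b a c; have h4 := chiR3_le_one b c a
  have h5 := chiR3_le_one c a b; have h6 := chiR3_le_one c b a
  linarith

lemma sym_support {k : ℤ} {v : Fin 3 → ℤ} (hk : v 0 + v 1 + v 2 = k)
    (h : sym3R chiR3 (v 0) (v 1) (v 2) ≠ 0) :
    (v 0 = -k ∧ v 1 = k ∧ v 2 = k) ∨ (v 0 = k ∧ v 1 = -k ∧ v 2 = k) ∨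
      (v 0 = k ∧ v 1 = k ∧ v 2 = -k) := by
  unfold sym3R chiR3 at h
  split_ifs at h <;> first | omega | norm_num at h

lemma Q_eval1 (α β γ : ℝ) (k : ℤ) :
    Q3full α β γ (-k) k k = Complex.I * (k:ℂ)^3 * ((α + β/3 - 4*γ/3 : ℝ) : ℂ) := by
  rw [Q3full]; push_cast; ring

lemma Q_eval2 (α β γ : ℝ) (k : ℤ) :
    Q3full α β γ k (-k) k = Complex.I * (k:ℂ)^3 * ((α + β/3 - 4*γ/3 : ℝ) : ℂ) := by
  rw [Q3full]; push_cast; ring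

lemma Q_eval3 (α β γ : ℝ) (k : ℤ) :
    Q3full α β γ k k (-k) = Complex.I * (k:ℂ)^3 * ((α + β/3 - 4*γ/3 : ℝ) : ℂ) := by
  rw [Q3full]; push_cast; ring

lemma Q_abs_aux (α β γ : ℝ) (k : ℤ) :
    ‖Complex.I * (k:ℂ)^3 * ((α + β/3 - 4*γ/3 : ℝ) : ℂ)‖
      = |(k:ℝ)|^3 * |α + β/3 - 4*γ/3| := by
  rw [norm_mul, norm_mul, norm_pow, Complex.norm_I, Complex.norm_intCast, Complex.norm_real,
    Real.norm_eq_abs]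
  push_cast; ring

lemma key_decay {s : ℝ} (hs : 3/2 ≤ s) (k : ℤ) :
    |(k:ℝ)|^3 * (jbr k ^ (-s) * jbr k ^ (-s)) ≤ 1 := by
  have hj := one_le_jbr k
  have h1 : |(k:ℝ)|^3 ≤ jbr k ^ s * jbr k ^ s := by
    calc |(k:ℝ)|^3 ≤ jbr k ^ 3 := pow_le_pow_left₀ (abs_nonneg _) (abs_le_jbr k) 3
    _ = jbr k ^ ((3:ℕ):ℝ) := (Real.rpow_natCast _ 3).symm
    _ ≤ jbr k ^ (s+s) := Real.rpow_le_rpow_of_exponent_le hj (by push_cast; linarith)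
    _ = jbr k ^ s * jbr k ^ s := Real.rpow_add (jbr_pos k) s s
  have hjs : 0 < jbr k ^ s := Real.rpow_pos_of_pos (jbr_pos k) s
  rw [Real.rpow_neg (jbr_pos k).le, ← mul_inv, ← div_eq_mul_inv, div_le_one (by positivity)]
  exact h1

lemma mul_le_add_sq (a b : ℝ≥0∞) : a * b ≤ a^2 + b^2 := by
  rcases le_total a b with h | h
  · calc a*b ≤ b*b := mul_le_mul_left h b
    _ = b^2 := (sq b).symm
    _ ≤ a^2 + b^2 := le_add_self
  · calc a*b ≤ a*a := mul_le_mul_right h a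
    _ = a^2 := (sq a).symm
    _ ≤ a^2 + b^2 := le_self_add

lemma add3_sq_le (x y z : ℝ≥0∞) : (x + (y + z))^2 ≤ 9 * (x^2 + (y^2 + z^2)) := by
  calc (x+(y+z))^2
      = (x^2+(y^2+z^2)) + (x*y + x*y + (y*z + y*z) + (x*z + x*z)) := by ring
    _ ≤ (x^2+(y^2+z^2)) + ((x^2+y^2) + (x^2+y^2) + ((y^2+z^2)+(y^2+z^2)) + ((x^2+z^2)+(x^2+z^2))) := by
        gcongr <;> exact mul_le_add_sq _ _
    _ = 5*x^2 + 5*y^2 + 5*z^2 := by ring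
    _ ≤ 9*x^2 + 9*y^2 + 9*z^2 := by gcongr <;> norm_num
    _ = 9 * (x^2 + (y^2 + z^2)) := by ring

lemma wsum_neg (s : ℝ) (f : ℤ → ℂ) :
    ∑' k : ℤ, ENNReal.ofReal (jbr k ^ (2*s)) * (‖f (-k)‖₊ : ℝ≥0∞)^2 = hnorm s f ^ 2 := by
  rw [hnorm_sq]
  have := (Equiv.neg ℤ).tsum_eq (fun k => ENNReal.ofReal (jbr k ^ (2*s)) * (‖f k‖₊:ℝ≥0∞)^2)
  simp only [Equiv.neg_apply] at this
  rw [← this]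
  exact tsum_congr fun k => by rw [jbr_neg]
lemma tsum_bound (α β γ : ℝ) (f : Fin 3 → ℤ → ℂ) (k : ℤ) :
    (∑' v : { v : Fin 3 → ℤ // v 0 + v 1 + v 2 = k },
        ENNReal.ofReal (‖Q3full α β γ (v.1 0) (v.1 1) (v.1 2)‖ *
            (3 * sym3R chiR3 (v.1 0) (v.1 1) (v.1 2))) *
          ∏ l, (‖f l (v.1 l)‖₊ : ℝ≥0∞)) ≤
      ENNReal.ofReal (3 * (|α + β/3 - 4*γ/3| * |(k:ℝ)|^3)) *
          ((‖f 0 (-k)‖₊ : ℝ≥0∞) * (‖f 1 k‖₊ : ℝ≥0∞) * (‖f 2 k‖₊ : ℝ≥0∞)) +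
        (ENNReal.ofReal (3 * (|α + β/3 - 4*γ/3| * |(k:ℝ)|^3)) *
          ((‖f 0 k‖₊ : ℝ≥0∞) * (‖f 1 (-k)‖₊ : ℝ≥0∞) * (‖f 2 k‖₊ : ℝ≥0∞)) +
         ENNReal.ofReal (3 * (|α + β/3 - 4*γ/3| * |(k:ℝ)|^3)) *
          ((‖f 0 k‖₊ : ℝ≥0∞) * (‖f 1 k‖₊ : ℝ≥0∞) * (‖f 2 (-k)‖₊ : ℝ≥0∞))) := by
  classical
  set P := { v : Fin 3 → ℤ // v 0 + v 1 + v 2 = k } with hP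
  set F : P → ℝ≥0∞ := fun v =>
    ENNReal.ofReal (‖Q3full α β γ (v.1 0) (v.1 1) (v.1 2)‖ *
        (3 * sym3R chiR3 (v.1 0) (v.1 1) (v.1 2))) *
      ∏ l, (‖f l (v.1 l)‖₊ : ℝ≥0∞) with hF
  have ha0 : (![-k,k,k] : Fin 3 → ℤ) 0 + ![-k,k,k] 1 + ![-k,k,k] 2 = k := by simp
  have ha1 : (![k,-k,k] : Fin 3 → ℤ) 0 + ![k,-k,k] 1 + ![k,-k,k] 2 = k := by simp
  have ha2 : (![k,k,-k] : Fin 3 → ℤ) 0 + ![k,k,-k] 1 + ![k,k,-k] 2 = k := by simp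
  set a0 : P := ⟨![-k,k,k], ha0⟩ with ha0d
  set a1 : P := ⟨![k,-k,k], ha1⟩ with ha1d
  set a2 : P := ⟨![k,k,-k], ha2⟩ with ha2d
  have key : ∀ v : P, F v ≤
      (if v = a0 then F a0 else 0) + ((if v = a1 then F a1 else 0) + (if v = a2 then F a2 else 0)) := by
    intro v
    by_cases h0 : v = a0
    · rw [if_pos h0, h0]; exact le_self_add
    by_cases h1 : v = a1
    · rw [if_pos h1, h1]; exact le_add_left le_self_add
    by_cases h2 : v = a2
    · rw [if_pos h2, h2]; exact le_add_left (le_add_left le_rfl)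
    rw [if_neg h0, if_neg h1, if_neg h2]
    have hz : F v = 0 := by
      by_cases hsym : sym3R chiR3 (v.1 0) (v.1 1) (v.1 2) = 0
      · rw [hF]; simp [hsym]
      · exfalso
        rcases sym_support v.2 hsym with h | h | h
        · exact h0 (Subtype.ext (by funext i; fin_cases i <;> simp [ha0d, h.1, h.2.1, h.2.2]))
        · exact h1 (Subtype.ext (by funext i; fin_cases i <;> simp [ha1d, h.1, h.2.1, h.2.2]))
        · exact h2 (Subtype.ext (by funext i; fin_cases i <;> simp [ha2d, h.1, h.2.1, h.2.2]))
    simp [hz]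
  have habs : ∀ a b c : ℤ,
      Q3full α β γ a b c = Complex.I * (k:ℂ)^3 * ((α + β/3 - 4*γ/3 : ℝ) : ℂ) →
      ‖Q3full α β γ a b c‖ * (3 * sym3R chiR3 a b c)
        ≤ 3 * (|α + β/3 - 4*γ/3| * |(k:ℝ)|^3) := by
    intro a b c hq
    rw [hq, Q_abs_aux]
    have h1 := sym_nonneg a b c
    have h2 := sym_le_one a b c
    have h3 : (0:ℝ) ≤ |(k:ℝ)|^3 * |α + β/3 - 4*γ/3| := by positivity
    nlinarith
  have hb0 : F a0 ≤ ENNReal.ofReal (3 * (|α + β/3 - 4*γ/3| * |(k:ℝ)|^3)) *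
      ((‖f 0 (-k)‖₊ : ℝ≥0∞) * (‖f 1 k‖₊ : ℝ≥0∞) * (‖f 2 k‖₊ : ℝ≥0∞)) := by
    rw [hF]
    simp only [ha0d, Fin.prod_univ_three]
    refine mul_le_mul' (ENNReal.ofReal_le_ofReal ?_) ?_
    · exact habs _ _ _ (by simpa using Q_eval1 α β γ k)
    · simp
  have hb1 : F a1 ≤ ENNReal.ofReal (3 * (|α + β/3 - 4*γ/3| * |(k:ℝ)|^3)) *
      ((‖f 0 k‖₊ : ℝ≥0∞) * (‖f 1 (-k)‖₊ : ℝ≥0∞) * (‖f 2 k‖₊ : ℝ≥0∞)) := by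
    rw [hF]
    simp only [ha1d, Fin.prod_univ_three]
    refine mul_le_mul' (ENNReal.ofReal_le_ofReal ?_) ?_
    · exact habs _ _ _ (by simpa using Q_eval2 α β γ k)
    · simp
  have hb2 : F a2 ≤ ENNReal.ofReal (3 * (|α + β/3 - 4*γ/3| * |(k:ℝ)|^3)) *
      ((‖f 0 k‖₊ : ℝ≥0∞) * (‖f 1 k‖₊ : ℝ≥0∞) * (‖f 2 (-k)‖₊ : ℝ≥0∞)) := by
    rw [hF]
    simp only [ha2d, Fin.prod_univ_three]
    refine mul_le_mul' (ENNReal.ofReal_le_ofReal ?_) ?_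
    · exact habs _ _ _ (by simpa using Q_eval3 α β γ k)
    · simp
  calc (∑' v : P, F v)
      ≤ ∑' v : P, ((if v = a0 then F a0 else 0) +
          ((if v = a1 then F a1 else 0) + (if v = a2 then F a2 else 0))) :=
        ENNReal.tsum_le_tsum key
    _ = F a0 + (F a1 + F a2) := by
        rw [ENNReal.tsum_add, ENNReal.tsum_add, tsum_ite_eq, tsum_ite_eq, tsum_ite_eq]
    _ ≤ _ := add_le_add hb0 (add_le_add hb1 hb2)

lemma term_bound {s : ℝ} (hs : 3/2 ≤ s) {D : ℝ} (hD : 0 ≤ D) (k : ℤ)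
    (a b c B C : ℝ≥0∞)
    (hb : b ≤ ENNReal.ofReal (jbr k ^ (-s)) * B)
    (hc : c ≤ ENNReal.ofReal (jbr k ^ (-s)) * C) :
    ENNReal.ofReal (3*(D*|(k:ℝ)|^3)) * (a * b * c) ≤ (ENNReal.ofReal (3*D) * (B * C)) * a := by
  have hjn : 0 ≤ jbr k ^ (-s) := Real.rpow_nonneg (jbr_pos k).le _
  have hofr : ENNReal.ofReal (3*(D*|(k:ℝ)|^3)) *
      (ENNReal.ofReal (jbr k^(-s)) * ENNReal.ofReal (jbr k^(-s))) ≤ ENNReal.ofReal (3*D) := by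
    rw [← ENNReal.ofReal_mul hjn, ← ENNReal.ofReal_mul (by positivity)]
    apply ENNReal.ofReal_le_ofReal
    calc 3*(D*|(k:ℝ)|^3) * (jbr k^(-s) * jbr k^(-s))
        = 3*D*(|(k:ℝ)|^3*(jbr k^(-s)*jbr k^(-s))) := by ring
      _ ≤ 3*D*1 := mul_le_mul_of_nonneg_left (key_decay hs k) (by positivity)
      _ = 3*D := mul_one _
  calc ENNReal.ofReal (3*(D*|(k:ℝ)|^3)) * (a * b * c)
      ≤ ENNReal.ofReal (3*(D*|(k:ℝ)|^3)) *
        (a * (ENNReal.ofReal (jbr k^(-s)) * B) * (ENNReal.ofReal (jbr k^(-s)) * C)) := by gcongr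
    _ = (ENNReal.ofReal (3*(D*|(k:ℝ)|^3)) *
        (ENNReal.ofReal (jbr k^(-s)) * ENNReal.ofReal (jbr k^(-s)))) * ((B*C)*a) := by ring
    _ ≤ ENNReal.ofReal (3*D) * ((B*C)*a) := mul_le_mul_left hofr _
    _ = (ENNReal.ofReal (3*D) * (B*C)) * a := by ring

theorem stmt19 (s : ℝ) (hs : 3 / 2 ≤ s) (α β γ : ℝ) :
    ∃ C : ℝ, 0 < C ∧
      ∀ f : Fin 3 → ℤ → ℂ,
        wnorm s (fun k =>
          ∑' v : { v : Fin 3 → ℤ // v 0 + v 1 + v 2 = k },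
            ENNReal.ofReal (‖Q3full α β γ (v.1 0) (v.1 1) (v.1 2)‖ *
                (3 * sym3R chiR3 (v.1 0) (v.1 1) (v.1 2))) *
              ∏ l, (‖f l (v.1 l)‖₊ : ℝ≥0∞)) ≤
          ENNReal.ofReal C * ∏ l, hnorm s (f l) := by
  classical
  have hD0 : (0:ℝ) ≤ |α + β/3 - 4*γ/3| := abs_nonneg _
  refine ⟨18 * |α + β/3 - 4*γ/3| + 1, by positivity, ?_⟩
  intro f
  set N : Fin 3 → ℝ≥0∞ := fun l => hnorm s (f l) with hNdef
  set U0 : ℤ → ℝ≥0∞ := fun k =>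
    (ENNReal.ofReal (3*|α + β/3 - 4*γ/3|) * (N 1 * N 2)) * (‖f 0 (-k)‖₊ : ℝ≥0∞) with hU0d
  set U1 : ℤ → ℝ≥0∞ := fun k =>
    (ENNReal.ofReal (3*|α + β/3 - 4*γ/3|) * (N 0 * N 2)) * (‖f 1 (-k)‖₊ : ℝ≥0∞) with hU1d
  set U2 : ℤ → ℝ≥0∞ := fun k =>
    (ENNReal.ofReal (3*|α + β/3 - 4*γ/3|) * (N 0 * N 1)) * (‖f 2 (-k)‖₊ : ℝ≥0∞) with hU2d
  have step1 : ∀ k : ℤ,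
      (∑' v : { v : Fin 3 → ℤ // v 0 + v 1 + v 2 = k },
        ENNReal.ofReal (‖Q3full α β γ (v.1 0) (v.1 1) (v.1 2)‖ *
            (3 * sym3R chiR3 (v.1 0) (v.1 1) (v.1 2))) *
          ∏ l, (‖f l (v.1 l)‖₊ : ℝ≥0∞)) ≤ U0 k + (U1 k + U2 k) := by
    intro k
    refine le_trans (tsum_bound α β γ f k) (add_le_add ?_ (add_le_add ?_ ?_))
    · rw [hU0d]
      exact term_bound hs hD0 k _ _ _ _ _ (by rw [hNdef]; exact le_hnorm s (f 1) k)
        (by rw [hNdef]; exact le_hnorm s (f 2) k)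
    · rw [hU1d]
      calc ENNReal.ofReal (3 * (|α + β/3 - 4*γ/3| * |(k:ℝ)|^3)) *
            ((‖f 0 k‖₊ : ℝ≥0∞) * (‖f 1 (-k)‖₊ : ℝ≥0∞) * (‖f 2 k‖₊ : ℝ≥0∞))
          = ENNReal.ofReal (3 * (|α + β/3 - 4*γ/3| * |(k:ℝ)|^3)) *
            ((‖f 1 (-k)‖₊ : ℝ≥0∞) * (‖f 0 k‖₊ : ℝ≥0∞) * (‖f 2 k‖₊ : ℝ≥0∞)) := by ring
        _ ≤ _ := term_bound hs hD0 k _ _ _ _ _ (by rw [hNdef]; exact le_hnorm s (f 0) k)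
            (by rw [hNdef]; exact le_hnorm s (f 2) k)
    · rw [hU2d]
      calc ENNReal.ofReal (3 * (|α + β/3 - 4*γ/3| * |(k:ℝ)|^3)) *
            ((‖f 0 k‖₊ : ℝ≥0∞) * (‖f 1 k‖₊ : ℝ≥0∞) * (‖f 2 (-k)‖₊ : ℝ≥0∞))
          = ENNReal.ofReal (3 * (|α + β/3 - 4*γ/3| * |(k:ℝ)|^3)) *
            ((‖f 2 (-k)‖₊ : ℝ≥0∞) * (‖f 0 k‖₊ : ℝ≥0∞) * (‖f 1 k‖₊ : ℝ≥0∞)) := by ring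
        _ ≤ _ := term_bound hs hD0 k _ _ _ _ _ (by rw [hNdef]; exact le_hnorm s (f 0) k)
            (by rw [hNdef]; exact le_hnorm s (f 1) k)
  set B : ℝ≥0∞ := ENNReal.ofReal (3*|α + β/3 - 4*γ/3|) * (N 0 * N 1 * N 2) with hBd
  have hSj : ∀ (c : ℝ≥0∞) (j : Fin 3),
      (∑' k : ℤ, ENNReal.ofReal (jbr k ^ (2*s)) * ((c * (‖f j (-k)‖₊ : ℝ≥0∞))^2))
        = c^2 * (N j)^2 := by
    intro c j
    calc (∑' k : ℤ, ENNReal.ofReal (jbr k ^ (2*s)) * ((c * (‖f j (-k)‖₊ : ℝ≥0∞))^2))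
        = ∑' k : ℤ, c^2 * (ENNReal.ofReal (jbr k ^ (2*s)) * (‖f j (-k)‖₊ : ℝ≥0∞)^2) :=
          tsum_congr fun k => by ring
      _ = c^2 * ∑' k : ℤ, ENNReal.ofReal (jbr k ^ (2*s)) * (‖f j (-k)‖₊ : ℝ≥0∞)^2 :=
          ENNReal.tsum_mul_left
      _ = c^2 * (N j)^2 := by rw [wsum_neg, hNdef]
  have hS0 := hSj (ENNReal.ofReal (3*|α + β/3 - 4*γ/3|) * (N 1 * N 2)) 0
  have hS1 := hSj (ENNReal.ofReal (3*|α + β/3 - 4*γ/3|) * (N 0 * N 2)) 1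
  have hS2 := hSj (ENNReal.ofReal (3*|α + β/3 - 4*γ/3|) * (N 0 * N 1)) 2
  calc wnorm s (fun k =>
        ∑' v : { v : Fin 3 → ℤ // v 0 + v 1 + v 2 = k },
          ENNReal.ofReal (‖Q3full α β γ (v.1 0) (v.1 1) (v.1 2)‖ *
              (3 * sym3R chiR3 (v.1 0) (v.1 1) (v.1 2))) *
            ∏ l, (‖f l (v.1 l)‖₊ : ℝ≥0∞))
      ≤ wnorm s (fun k => U0 k + (U1 k + U2 k)) := wnorm_mono step1
    _ = (∑' k : ℤ, ENNReal.ofReal (jbr k ^ (2*s)) * (U0 k + (U1 k + U2 k))^2)^((1:ℝ)/2) := rfl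
    _ ≤ (∑' k : ℤ, ENNReal.ofReal (jbr k ^ (2*s)) *
          (9 * ((U0 k)^2 + ((U1 k)^2 + (U2 k)^2))))^((1:ℝ)/2) := by
        apply ENNReal.rpow_le_rpow _ (by norm_num)
        exact ENNReal.tsum_le_tsum fun k => mul_le_mul_right (add3_sq_le _ _ _) _
    _ = (9 * ((∑' k : ℤ, ENNReal.ofReal (jbr k ^ (2*s)) * (U0 k)^2) +
          ((∑' k : ℤ, ENNReal.ofReal (jbr k ^ (2*s)) * (U1 k)^2) +
           (∑' k : ℤ, ENNReal.ofReal (jbr k ^ (2*s)) * (U2 k)^2))))^((1:ℝ)/2) := by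
        congr 1
        calc ∑' k : ℤ, ENNReal.ofReal (jbr k ^ (2*s)) * (9 * ((U0 k)^2 + ((U1 k)^2 + (U2 k)^2)))
            = ∑' k : ℤ, 9 * (ENNReal.ofReal (jbr k ^ (2*s)) * (U0 k)^2 +
                (ENNReal.ofReal (jbr k ^ (2*s)) * (U1 k)^2 +
                 ENNReal.ofReal (jbr k ^ (2*s)) * (U2 k)^2)) := tsum_congr fun k => by ring
          _ = 9 * ∑' k : ℤ, (ENNReal.ofReal (jbr k ^ (2*s)) * (U0 k)^2 +
                (ENNReal.ofReal (jbr k ^ (2*s)) * (U1 k)^2 +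
                 ENNReal.ofReal (jbr k ^ (2*s)) * (U2 k)^2)) := ENNReal.tsum_mul_left
          _ = _ := by rw [ENNReal.tsum_add, ENNReal.tsum_add]
    _ = (9 * (B^2 + (B^2 + B^2)))^((1:ℝ)/2) := by
        rw [hU0d, hU1d, hU2d]
        rw [hS0, hS1, hS2, hBd]
        congr 3 <;> ring
    _ ≤ ((6*B)^2)^((1:ℝ)/2) := by
        apply ENNReal.rpow_le_rpow _ (by norm_num)
        calc 9 * (B^2+(B^2+B^2)) = 27 * B^2 := by ring
          _ ≤ 36 * B^2 := by gcongr <;> norm_num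
          _ = (6*B)^2 := by ring
    _ = 6 * B := sq_rpow_half _
    _ ≤ ENNReal.ofReal (18 * |α + β/3 - 4*γ/3| + 1) * ∏ l, hnorm s (f l) := by
        rw [hBd, hNdef]
        rw [Fin.prod_univ_three (fun l => hnorm s (f l))]
        have h6 : (6:ℝ≥0∞) * ENNReal.ofReal (3*|α + β/3 - 4*γ/3|) ≤
            ENNReal.ofReal (18 * |α + β/3 - 4*γ/3| + 1) := by
          have : (6:ℝ≥0∞) = ENNReal.ofReal (6:ℝ) := by simp
          rw [this, ← ENNReal.ofReal_mul (by norm_num)]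
          exact ENNReal.ofReal_le_ofReal (by linarith)
        calc 6 * (ENNReal.ofReal (3*|α + β/3 - 4*γ/3|) *
              (hnorm s (f 0) * hnorm s (f 1) * hnorm s (f 2)))
            = (6 * ENNReal.ofReal (3*|α + β/3 - 4*γ/3|)) *
              (hnorm s (f 0) * hnorm s (f 1) * hnorm s (f 2)) := by ring
          _ ≤ _ := mul_le_mul_left h6 _
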